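/- arXiv:1806.08469 — 5 statements merged into one kernel-verified Lean document; each statement's English description precedes it below -/
import Mathlib

section
/- Let B ∈ M_{m,n}(𝔽_q[[t]]) be a glissando matrix. Suppose P ∈ GL_m(𝔽_q[[t]]) and Q ∈ GL_n(𝔽_q[[t]]) are invertible matrices such that P·B·Q is a rectangular diagonal matrix (all off-diagonal entries zero) whose diagonal entries d_0, d_1, …, d_{min(m,n)−1} satisfy d_i ∣ d_{i+1} for all i. Then t^i divides d_i for every i with 0 ≤ i ≤ min(m,n)−1. Equivalently, the elementary divisors s_1 ≤ s_2 ≤ ⋯ of B (where t^{s_l} is the (l−1, l−1)-entry of the Smith normal form of B, with s_l = +∞ corresponding to a zero diagonal entry) satisfy s_l ≥ l − 1 for every l. -/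
open Polynomial

noncomputable section DrinfeldGM

/-- Integer-argument binomial coefficient `C(c,d)`, equal to `0` whenever any of
`c`, `d`, `c - d` is negative. -/
def intChoose (c d : ℤ) : ℤ :=
  if 0 ≤ c ∧ 0 ≤ d ∧ d ≤ c then (Nat.choose c.toNat d.toNat : ℤ) else 0

/-- The `(i,j)` entry of the matrix of the `U`-operator on `S_k(Γ₁(t))` in the
Bandini–Valentino basis (here `t` is the polynomial variable `X`).  For `i = j` it is
`(-t)^j C(k-2-j, j)`; for `i = j + h(q-1)` with `h ≠ 0` (equivalently `(q-1) ∣ i - j`,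
`i ≠ j`, in which case `h(q-1) = i - j`) it is
`-t^j (C(k-2-i, j-i) + (-1)^{j+1} C(k-2-i, j))`; and it is `0` otherwise. -/
def Uent (F : Type*) [Field F] (q k : ℕ) (i j : ℕ) : Polynomial F :=
  if i = j then
    (-Polynomial.X : Polynomial F) ^ j * ((intChoose ((k : ℤ) - 2 - (j : ℤ)) (j : ℤ) : ℤ) : Polynomial F)
  else if ((q : ℤ) - 1) ∣ ((i : ℤ) - (j : ℤ)) then
    -((Polynomial.X : Polynomial F) ^ j *
      ((intChoose ((k : ℤ) - 2 - (i : ℤ)) ((j : ℤ) - (i : ℤ)) +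
        (-1) ^ (j + 1) * intChoose ((k : ℤ) - 2 - (i : ℤ)) (j : ℤ) : ℤ) : Polynomial F))
  else 0

/-- The representing matrix `U^{(k)} ∈ M_{k-1}(𝔽_q[t])` of the `U`-operator on
`S_k(Γ₁(t))`, rows and columns indexed by `0, …, k-2`. -/
def Umat (F : Type*) [Field F] (q k : ℕ) :
    Matrix (Fin (k - 1)) (Fin (k - 1)) (Polynomial F) :=
  Matrix.of fun i j => Uent F q k (i : ℕ) (j : ℕ)

/-- A matrix over `𝔽_q[[t]]` is *glissando* if every entry of its `j`-th column is an
`𝔽_q`-multiple of `t^j`. -/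
def Glissando {F : Type*} [Field F] {m n : ℕ}
    (B : Matrix (Fin m) (Fin n) (PowerSeries F)) : Prop :=
  ∀ i j, ∃ c : F, B i j = PowerSeries.C c * (PowerSeries.X : PowerSeries F) ^ (j : ℕ)

/-- The inclusion `𝔽_q[t] → 𝔽_q[[t]]`. -/
def polyToPS (F : Type*) [Field F] : Polynomial F →+* PowerSeries F :=
  Polynomial.coeToPowerSeries.ringHom

/-- The inclusion of `𝔽_q[[t]]` into a fixed algebraic closure `K̄` of `K = 𝔽_q((t))`. -/
def psToKbar (F : Type*) [Field F] :
    PowerSeries F →+* AlgebraicClosure (LaurentSeries F) :=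
  (algebraMap (LaurentSeries F) (AlgebraicClosure (LaurentSeries F))).comp
    (algebraMap (PowerSeries F) (LaurentSeries F))

/-- The inclusion `𝔽_q[t] → K̄`. -/
def polyToKbar (F : Type*) [Field F] :
    Polynomial F →+* AlgebraicClosure (LaurentSeries F) :=
  (psToKbar F).comp (polyToPS F)

/-- The element `t` of `K̄`. -/
def tbar (F : Type*) [Field F] : AlgebraicClosure (LaurentSeries F) :=
  psToKbar F PowerSeries.X

/-- Integrality over `𝔽_q[[t]]` of an element of `K̄`. -/
def IntegralPS (F : Type*) [Field F] (x : AlgebraicClosure (LaurentSeries F)) : Prop :=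
  letI : Algebra (PowerSeries F) (AlgebraicClosure (LaurentSeries F)) := (psToKbar F).toAlgebra
  IsIntegral (PowerSeries F) x

/-- `HasVal F λ α` says that `λ ∈ K̄` is nonzero and has valuation `α` for the unique
extension `v` to `K̄` of the `t`-adic valuation with `v(t) = 1`: writing `α = a/b` with
`b > 0`, this means that both `λ^b/t^a` and `t^a/λ^b` are integral over `𝔽_q[[t]]`. -/
def HasVal (F : Type*) [Field F] (lam : AlgebraicClosure (LaurentSeries F)) (α : ℚ) : Prop :=
  lam ≠ 0 ∧ ∃ a b : ℤ, 0 < b ∧ α = (a : ℚ) / (b : ℚ) ∧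
    IntegralPS F (lam ^ b / tbar F ^ a) ∧ IntegralPS F (tbar F ^ a / lam ^ b)

/-- `d(k, α)`: the number of roots `λ` of `det(X·I - U^{(k)})` in `K̄` with `v(λ) = α`,
counted with multiplicity.  This is the dimension of the slope-`α` generalized eigenspace
of the `U`-operator on `S_k(Γ₁(t))`. -/
def dDim (F : Type*) [Field F] (q k : ℕ) (α : ℚ) : ℕ :=
  letI := Classical.decPred fun lam : AlgebraicClosure (LaurentSeries F) => HasVal F lam α
  Multiset.card <| Multiset.filter (fun lam => HasVal F lam α) <|
    (((Umat F q k).charpoly).map (polyToKbar F)).roots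

/-- `det(I - t^l X B)` for a square matrix `B` over `𝔽_q[[t]]`, as a polynomial in `X`
over `𝔽_q[[t]]`. -/
def charSeriesTw (F : Type*) [Field F] {m : ℕ} (l : ℕ)
    (B : Matrix (Fin m) (Fin m) (PowerSeries F)) : Polynomial (PowerSeries F) :=
  Matrix.det (1 - (Polynomial.C ((PowerSeries.X : PowerSeries F) ^ l) * Polynomial.X) •
    B.map Polynomial.C)

/-- `det(I - X B)` for a square matrix `B` over `𝔽_q[[t]]`. -/
def charSeriesPS (F : Type*) [Field F] {m : ℕ}
    (B : Matrix (Fin m) (Fin m) (PowerSeries F)) : Polynomial (PowerSeries F) :=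
  Matrix.det (1 - (Polynomial.X : Polynomial (PowerSeries F)) • B.map Polynomial.C)

/-- `P^{(k)}(X) = det(I - X·U^{(k)}) ∈ 𝔽_q[t][X]`. -/
def Pser (F : Type*) [Field F] (q k : ℕ) : Polynomial (Polynomial F) :=
  Matrix.det (1 - (Polynomial.X : Polynomial (Polynomial F)) • (Umat F q k).map Polynomial.C)

/-!
Write `D = P B Q` with diagonal `d₀ ∣ d₁ ∣ ⋯` and `R = Q⁻¹`. As `D` is diagonal, row `a` of
`D R = P B` is `d_a` times row `a` of `R`, while column `j` of `P B` is divisible by `t^j`.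
Reducing `R` modulo `t`, rows `0, …, i` of an invertible matrix cannot all vanish in the
columns `≥ i`, so `R a j` is a unit for some `a ≤ i ≤ j`; then `t^i ∣ t^j ∣ d_a ∣ d_i`.
-/

namespace Matrix

theorem exists_apply_ne_zero_of_isUnit {K : Type*} [Field K] {n : ℕ}
    {M : Matrix (Fin n) (Fin n) K} (hM : IsUnit M) {i : ℕ} (hi : i < n) :
    ∃ a j : Fin n, (a : ℕ) ≤ i ∧ i ≤ (j : ℕ) ∧ M a j ≠ 0 := by
  by_contra! hzero
  -- otherwise rows `0, …, i` are `i + 1` independent vectors supported on `i` coordinates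
  have hrows : LinearIndependent K (M.row ∘ Fin.castLE hi) :=
    (linearIndependent_rows_iff_isUnit.2 hM).comp _ (Fin.castLE_injective _)
  have htrunc : ¬ LinearIndependent K fun (a : Fin (i + 1)) (j : Fin i) =>
      M (Fin.castLE hi a) (Fin.castLE hi.le j) := fun h => by
    simpa using h.fintype_card_le_finrank
  obtain ⟨c, hc, k, hk⟩ := Fintype.not_linearIndependent_iff.mp htrunc
  refine hk (Fintype.linearIndependent_iff.mp hrows c (funext fun j => ?_) k)
  by_cases hj : (j : ℕ) < i
  · simpa using congrFun hc ⟨j, hj⟩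
  · rw [Finset.sum_apply]
    exact Finset.sum_eq_zero fun a _ => by
      simp [hzero (Fin.castLE hi a) j (Fin.is_le a) (not_lt.mp hj)]

theorem exists_isUnit_apply_of_isUnit {R : Type*} [CommRing R] [IsLocalRing R] {n : ℕ}
    {M : Matrix (Fin n) (Fin n) R} (hM : IsUnit M) {i : ℕ} (hi : i < n) :
    ∃ a j : Fin n, (a : ℕ) ≤ i ∧ i ≤ (j : ℕ) ∧ IsUnit (M a j) := by
  obtain ⟨a, j, hai, hij, hne⟩ :=
    exists_apply_ne_zero_of_isUnit (hM.map (IsLocalRing.residue R).mapMatrix) hi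
  exact ⟨a, j, hai, hij, (IsLocalRing.residue_ne_zero_iff_isUnit _).mp hne⟩

variable {α : Type*} {m n : ℕ}

theorem mul_apply_of_off_diag_eq_zero [NonUnitalNonAssocSemiring α] {l : Type*}
    {D : Matrix (Fin m) (Fin n) α} (hD : ∀ (i : Fin m) (j : Fin n), (i : ℕ) ≠ (j : ℕ) → D i j = 0)
    (M : Matrix (Fin n) l α) {a : Fin m} {a' : Fin n} (haa' : (a : ℕ) = a') (j : l) :
    (D * M) a j = D a a' * M a' j := by
  rw [mul_apply, Finset.sum_eq_single a' (fun b _ hb => by rw [hD a b (by omega), zero_mul])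
    (fun h => absurd (Finset.mem_univ _) h)]

theorem diag_dvd_diag_of_le [Monoid α] {D : Matrix (Fin m) (Fin n) α}
    (hchain : ∀ (i : ℕ) (him : i + 1 < m) (hin : i + 1 < n),
      D ⟨i, Nat.lt_of_succ_lt him⟩ ⟨i, Nat.lt_of_succ_lt hin⟩ ∣ D ⟨i + 1, him⟩ ⟨i + 1, hin⟩)
    {a b : ℕ} (hab : a ≤ b) (hbm : b < m) (hbn : b < n) :
    D ⟨a, hab.trans_lt hbm⟩ ⟨a, hab.trans_lt hbn⟩ ∣ D ⟨b, hbm⟩ ⟨b, hbn⟩ := by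
  induction b, hab using Nat.le_induction with
  | base => exact dvd_rfl
  | succ b _ ih => exact (ih (by omega) (by omega)).trans (hchain b hbm hbn)

end Matrix

theorem Glissando.X_pow_dvd_mul_apply {F : Type*} [Field F] {l m n : ℕ}
    {B : Matrix (Fin m) (Fin n) (PowerSeries F)} (hB : Glissando B)
    (A : Matrix (Fin l) (Fin m) (PowerSeries F)) (r : Fin l) (j : Fin n) :
    (PowerSeries.X : PowerSeries F) ^ (j : ℕ) ∣ (A * B) r j := by
  rw [Matrix.mul_apply]
  refine Finset.dvd_sum fun k _ => dvd_mul_of_dvd_right ?_ _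
  obtain ⟨c, hc⟩ := hB k j
  exact hc ▸ dvd_mul_left _ _

/-- Lower bound for the elementary divisors of a glissando matrix: if `P·B·Q` is a Smith
normal form of a glissando matrix `B` (with `P`, `Q` invertible, `P·B·Q` rectangular
diagonal with diagonal entries forming a divisibility chain), then `t^i` divides the
`i`-th diagonal entry for every `i`. -/
theorem glissando_smith_diag_dvd
    (F : Type) [Field F]
    (m n : ℕ) (B : Matrix (Fin m) (Fin n) (PowerSeries F)) (hB : Glissando B)
    (P : Matrix (Fin m) (Fin m) (PowerSeries F)) (Q : Matrix (Fin n) (Fin n) (PowerSeries F))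
    (hQ : IsUnit Q)
    (hdiag : ∀ (i : Fin m) (j : Fin n), (i : ℕ) ≠ (j : ℕ) → (P * B * Q) i j = 0)
    (hchain : ∀ (i : ℕ) (him : i + 1 < m) (hin : i + 1 < n),
      (P * B * Q) ⟨i, by omega⟩ ⟨i, by omega⟩ ∣ (P * B * Q) ⟨i + 1, him⟩ ⟨i + 1, hin⟩)
    (i : ℕ) (him : i < m) (hin : i < n) :
    (PowerSeries.X : PowerSeries F) ^ i ∣ (P * B * Q) ⟨i, him⟩ ⟨i, hin⟩ := by
  obtain ⟨a, j, hai, hij, hunit⟩ :=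
    Matrix.exists_isUnit_apply_of_isUnit (Matrix.isUnit_nonsing_inv_iff.2 hQ) hin
  have hPB : P * B * Q * Q⁻¹ = P * B :=
    Matrix.mul_nonsing_inv_cancel_right _ _ ((Matrix.isUnit_iff_isUnit_det Q).mp hQ)
  have hja : (PowerSeries.X : PowerSeries F) ^ (j : ℕ) ∣ (P * B * Q) ⟨a, by omega⟩ a := by
    have := hB.X_pow_dvd_mul_apply P ⟨a, by omega⟩ j
    rwa [← hPB, Matrix.mul_apply_of_off_diag_eq_zero hdiag _ rfl, hunit.dvd_mul_right] at this
  calc (PowerSeries.X : PowerSeries F) ^ i ∣ PowerSeries.X ^ (j : ℕ) := pow_dvd_pow _ hij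
    _ ∣ (P * B * Q) ⟨a, by omega⟩ a := hja
    _ ∣ (P * B * Q) ⟨i, him⟩ ⟨i, hin⟩ := Matrix.diag_dvd_diag_of_le hchain hai him hin

end DrinfeldGM
end

section
/- Let B ∈ M_m(𝔽_q[[t]]) be a glissando square matrix and let l ≥ 0 be an integer. Write P(X) = det(I − t^l X B) = Σ_{n=0}^m p_n X^n ∈ 𝔽_q[[t]][X]. Then for every n with 0 ≤ n ≤ m, the coefficient p_n satisfies v_t(p_n) ≥ l·n + n(n−1)/2, where v_t is the t-adic valuation on 𝔽_q[[t]] normalized by v_t(t) = 1 (and v_t(0) = +∞). -/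
open Polynomial

noncomputable section DrinfeldGM

/-! The coefficient of `X^n` in `det (1 + X • M)` is the sum of the `n × n` principal minors of
`M = -t^l B`. Column `j` of `M` is divisible by `t^(l + j)`, so the minor on a set `S` of `n`
indices is divisible by `t^(l n + ∑ S)`, and `∑ S ≥ 0 + 1 + ⋯ + (n - 1)`. -/

open Finset

theorem Finset.sum_range_card_le_sum (s : Finset ℕ) : ∑ i ∈ range #s, i ≤ ∑ i ∈ s, i := by
  induction s using Finset.induction_on_max with
  | empty => simp
  | insert a t hlt ih =>
    have hat : a ∉ t := fun h => lt_irrefl a (hlt a h)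
    have hcard : #t ≤ a := by
      simpa using card_le_card (fun x hx => mem_range.2 (hlt x hx) : t ⊆ range a)
    rw [card_insert_of_notMem hat, sum_range_succ, sum_insert hat]
    omega

theorem Fin.card_mul_card_sub_one_div_two_le_sum {m : ℕ} (s : Finset (Fin m)) :
    #s * (#s - 1) / 2 ≤ ∑ i ∈ s, (i : ℕ) := by
  simpa [sum_range_id] using (s.map Fin.valEmbedding).sum_range_card_le_sum

theorem Matrix.prod_dvd_det_of_forall_dvd {R ι : Type*} [CommRing R] [Fintype ι] [DecidableEq ι]
    (A : Matrix ι ι R) (d : ι → R) (h : ∀ i j, d j ∣ A i j) : ∏ j, d j ∣ A.det := by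
  rw [Matrix.det_apply']
  exact dvd_sum fun σ _ => (prod_dvd_prod_of_dvd _ _ fun j _ => h (σ j) j).mul_left _

theorem Glissando.pow_dvd {F : Type*} [Field F] {m n : ℕ}
    {B : Matrix (Fin m) (Fin n) (PowerSeries F)} (hB : Glissando B) (i : Fin m) (j : Fin n) :
    (PowerSeries.X : PowerSeries F) ^ (j : ℕ) ∣ B i j := by
  obtain ⟨c, hc⟩ := hB i j
  exact hc ▸ dvd_mul_left _ _

theorem charSeriesTw_eq_det_one_add_X_smul (F : Type*) [Field F] {m : ℕ} (l : ℕ)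
    (B : Matrix (Fin m) (Fin m) (PowerSeries F)) :
    charSeriesTw F l B =
      Matrix.det
        (1 + (X : (PowerSeries F)[X]) • (-((PowerSeries.X : PowerSeries F) ^ l • B)).map C) := by
  rw [charSeriesTw, sub_eq_add_neg]
  congr 2
  ext i j : 1
  simp only [Matrix.smul_apply, Matrix.neg_apply, Matrix.map_apply, smul_eq_mul, map_neg,
    map_mul, map_pow]
  ring

theorem glissando_charSeries_coeff_dvd_general
    (F : Type) [Field F]
    (m : ℕ) (B : Matrix (Fin m) (Fin m) (PowerSeries F)) (hB : Glissando B)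
    (l : ℕ) (n : ℕ) :
    (PowerSeries.X : PowerSeries F) ^ (l * n + n * (n - 1) / 2) ∣
      (charSeriesTw F l B).coeff n := by
  rw [charSeriesTw_eq_det_one_add_X_smul, Matrix.coeff_det_one_add_X_smul_eq_sum_minors]
  refine dvd_sum fun s hs => ?_
  obtain rfl : #s = n := (mem_powersetCard.mp hs).2
  calc (PowerSeries.X : PowerSeries F) ^ (l * #s + #s * (#s - 1) / 2)
      ∣ ∏ j : s, PowerSeries.X ^ (l + (j : ℕ)) := by
        rw [prod_pow_eq_pow_sum, sum_coe_sort s fun j => l + (j : ℕ), sum_add_distrib, sum_const,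
          smul_eq_mul, mul_comm #s l]
        exact pow_dvd_pow _ (add_le_add_right (Fin.card_mul_card_sub_one_div_two_le_sum s) _)
    _ ∣ _ := Matrix.prod_dvd_det_of_forall_dvd _ _ fun i j => by
        simpa [pow_add] using mul_dvd_mul_left _ (hB.pow_dvd i j)

/-- For a glissando square matrix `B ∈ M_m(𝔽_q[[t]])` and `l ≥ 0`, the coefficients
`p_n` of `P(X) = det(I - t^l X B) = Σ p_n X^n` satisfy `v_t(p_n) ≥ l·n + n(n-1)/2`,
i.e. `t^{l·n + n(n-1)/2}` divides `p_n`, for every `0 ≤ n ≤ m`. -/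
theorem glissando_charSeries_coeff_dvd
    (p q : ℕ) (hp : p.Prime) (hq : ∃ e : ℕ, 1 ≤ e ∧ q = p ^ e)
    (F : Type) [Field F] [Fintype F] (hF : Fintype.card F = q)
    (m : ℕ) (B : Matrix (Fin m) (Fin m) (PowerSeries F)) (hB : Glissando B)
    (l : ℕ) (n : ℕ) (hn : n ≤ m) :
    (PowerSeries.X : PowerSeries F) ^ (l * n + n * (n - 1) / 2) ∣
      (charSeriesTw F l B).coeff n :=
  glissando_charSeries_coeff_dvd_general F m B hB l n

end DrinfeldGM
end

section
/- Let p be a prime, q > 1 a power of p and k ≥ 2 an integer. Then d(k, 0) = 1; that is, the characteristic polynomial det(X·I − U^{(k)}) has exactly one root λ (counted with multiplicity) in the algebraic closure K̄ of 𝔽_q((t)) with v(λ) = 0. -/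
open Polynomial

noncomputable section DrinfeldGM

/-!
Modulo `t` every column of `U^{(k)}` except the first vanishes and its `(0,0)` entry is `1`, so
`det(X·I - U^{(k)})` reduces to `(X - 1) X^{k-2}`. Since `𝔽_q[[t]]` is henselian it factors as
`(X - λ) g` with `λ ≡ 1` a unit and `g ≡ X^{k-2}` monic. Then `v(λ) = 0`, while a root `μ` of `g`
with `v(μ) = 0` would have `μ⁻¹` integral, and dividing `g(μ) = 0` by `μ^{k-2}` would exhibit
`t⁻¹` as integral over the integrally closed ring `𝔽_q[[t]]`.
-/

theorem Matrix.charpoly_eq_X_sub_C_mul_X_pow_of_apply_eq_zero {R : Type*} [CommRing R] {n : ℕ}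
    [NeZero n] (M : Matrix (Fin n) (Fin n) R) (hM : ∀ i j, j ≠ 0 → M i j = 0) :
    M.charpoly = (X - C (M 0 0)) * X ^ (n - 1) := by
  obtain ⟨m, rfl⟩ := Nat.exists_eq_succ_of_ne_zero (NeZero.ne n)
  have hupper : M.transpose.IsUpperTriangular := fun i j hji =>
    hM j i (Fin.pos_iff_ne_zero.mp ((Fin.zero_le j).trans_lt hji))
  rw [← charpoly_transpose, charpoly_of_isUpperTriangular _ hupper, Fin.prod_univ_succ]
  simp [hM _ _ (Fin.succ_ne_zero _)]

theorem isIntegral_inv_algebraMap_of_aeval_X_pow_add_C_mul {A L : Type*} [CommRing A] [Field L]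
    [Algebra A L] {n : ℕ} {t : A} {h : A[X]} (hh : h.natDegree ≤ n) {μ : L}
    (hμ : aeval μ (X ^ n + C t * h) = 0) (hμ0 : μ ≠ 0) (hint : IsIntegral A μ⁻¹) :
    IsIntegral A (algebraMap A L t)⁻¹ := by
  let := invertibleOfNonzero hμ0
  set w := aeval μ⁻¹ (reflect n h)
  have hreflect : aeval μ h = w * μ ^ n := by
    rw [aeval_def, ← eval₂_reflect_mul_pow _ μ n h hh, invOf_eq_inv]
    rfl
  have hw : algebraMap A L t * -w = 1 := by
    have : μ ^ n * (1 + algebraMap A L t * w) = 0 := by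
      rw [← hμ, map_add, map_mul, hreflect, aeval_C, map_pow, aeval_X]
      ring
    linear_combination -(mul_eq_zero.mp this).resolve_left (pow_ne_zero n hμ0)
  rw [inv_eq_of_mul_eq_one_right hw]
  exact (IsIntegral.of_mem_of_fg _ hint.fg_adjoin_singleton _
    (aeval_mem_adjoin_singleton A μ⁻¹)).neg

theorem not_isIntegral_inv_algebraMap {A K L : Type*} [CommRing A] [IsDomain A]
    [IsIntegrallyClosed A] [Field K] [Algebra A K] [IsFractionRing A K] [Field L] [Algebra A L]
    [Algebra K L] [IsScalarTower A K L] {t : A} (ht0 : t ≠ 0) (ht : ¬IsUnit t) :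
    ¬IsIntegral A (algebraMap A L t)⁻¹ := by
  intro hint
  rw [IsScalarTower.algebraMap_apply A K L, ← map_inv₀] at hint
  obtain ⟨y, hy⟩ := IsIntegrallyClosed.isIntegral_iff.mp
    ((isIntegral_algHom_iff (IsScalarTower.toAlgHom A K L) (algebraMap K L).injective).mp hint)
  refine ht (IsUnit.of_mul_eq_one y (IsFractionRing.injective A K ?_))
  rw [map_mul, hy, map_one,
    mul_inv_cancel₀ ((map_ne_zero_iff _ (IsFractionRing.injective A K)).mpr ht0)]

section PowerSeries

variable {R : Type*} [CommRing R]

theorem exists_isRoot_constantCoeff_eq_of_isRoot_map {f : (PowerSeries R)[X]} (hf : f.Monic)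
    {a : R} (ha : (f.map PowerSeries.constantCoeff).IsRoot a)
    (hsimple : IsUnit ((f.map PowerSeries.constantCoeff).derivative.eval a)) :
    ∃ r, f.IsRoot r ∧ PowerSeries.constantCoeff r = a := by
  have hconst (p : (PowerSeries R)[X]) :
      PowerSeries.constantCoeff (p.eval (PowerSeries.C a)) =
        (p.map PowerSeries.constantCoeff).eval a := by
    rw [← eval_map_apply, PowerSeries.constantCoeff_C]
  obtain ⟨r, hr, hra⟩ := HenselianRing.is_henselian (I := Ideal.span {PowerSeries.X}) f hf
    (PowerSeries.C a) (by rw [Ideal.mem_span_singleton, PowerSeries.X_dvd_iff, hconst]; exact ha)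
    (.map _ (PowerSeries.isUnit_iff_constantCoeff.mpr (by rwa [hconst, ← derivative_map])))
  rw [Ideal.mem_span_singleton, PowerSeries.X_dvd_iff, map_sub, PowerSeries.constantCoeff_C,
    sub_eq_zero] at hra
  exact ⟨r, hr, hra⟩

theorem exists_X_sub_C_mul_of_map_constantCoeff_eq {f : (PowerSeries R)[X]} (hf : f.Monic)
    {a : R} {Q : R[X]} (hfQ : f.map PowerSeries.constantCoeff = (X - C a) * Q)
    (hQ : IsUnit (Q.eval a)) :
    ∃ r g, PowerSeries.constantCoeff r = a ∧ g.Monic ∧ f = (X - C r) * g ∧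
      g.map PowerSeries.constantCoeff = Q := by
  obtain ⟨r, hr, hra⟩ := exists_isRoot_constantCoeff_eq_of_isRoot_map hf (a := a)
    (by simp [hfQ]) (by simpa [hfQ, derivative_mul] using hQ)
  have hfactor : (X - C r) * (f /ₘ (X - C r)) = f := mul_divByMonic_eq_iff_isRoot.mpr hr
  refine ⟨r, f /ₘ (X - C r), hra, (monic_X_sub_C r).of_mul_monic_left (by rwa [hfactor]),
    hfactor.symm, (monic_X_sub_C a).isRegular.left ?_⟩
  change (X - C a) * _ = (X - C a) * Q
  rw [← hfQ]
  conv_rhs => rw [← hfactor]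
  simp [hra]

theorem exists_eq_X_pow_add_C_X_mul_of_map_constantCoeff_eq [IsDomain R]
    {g : (PowerSeries R)[X]} (hg : g.Monic) {n : ℕ}
    (hgn : g.map PowerSeries.constantCoeff = X ^ n) :
    ∃ h : (PowerSeries R)[X], h.natDegree ≤ n ∧ g = X ^ n + C PowerSeries.X * h := by
  have hdvd : C PowerSeries.X ∣ g - X ^ n := by
    rw [C_dvd_iff_dvd_coeff]
    intro i
    rw [PowerSeries.X_dvd_iff, ← coeff_map, Polynomial.map_sub, hgn, Polynomial.map_pow,
      Polynomial.map_X, sub_self, coeff_zero]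
  obtain ⟨h, hh⟩ := hdvd
  have hdeg : g.natDegree = n := by
    rw [← hg.natDegree_map PowerSeries.constantCoeff, hgn, natDegree_X_pow]
  refine ⟨h, ?_, by rw [← hh, add_sub_cancel]⟩
  rw [← natDegree_C_mul PowerSeries.X_ne_zero, ← hh]
  exact (natDegree_sub_le_of_le hdeg.le (natDegree_X_pow n).le).trans (max_self n).le

end PowerSeries

section

variable {F : Type*} [Field F]

theorem Uent_eval_zero_of_ne_zero (q k i : ℕ) {j : ℕ} (hj : j ≠ 0) :
    (Uent F q k i j).eval 0 = 0 := by
  unfold Uent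
  split_ifs <;> simp [zero_pow hj]

theorem Uent_zero_zero (q : ℕ) {k : ℕ} (hk : 2 ≤ k) : Uent F q k 0 0 = 1 := by
  simp [Uent, intChoose, show (2 : ℤ) ≤ k by exact_mod_cast hk]

theorem charpoly_map_Umat_eval_zero (q : ℕ) {k : ℕ} (hk : 2 ≤ k) :
    ((Umat F q k).map (evalRingHom 0)).charpoly = (X - C 1) * X ^ (k - 2) := by
  have : NeZero (k - 1) := ⟨by omega⟩
  rw [Matrix.charpoly_eq_X_sub_C_mul_X_pow_of_apply_eq_zero ((Umat F q k).map (evalRingHom 0))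
    fun i j hj => Uent_eval_zero_of_ne_zero q k i (Fin.val_ne_zero_iff.mpr hj)]
  simp [Umat, Uent_zero_zero q hk, show k - 1 - 1 = k - 2 by omega]

theorem map_constantCoeff_charpoly_Umat (q : ℕ) {k : ℕ} (hk : 2 ≤ k) :
    (((Umat F q k).charpoly).map (polyToPS F)).map PowerSeries.constantCoeff =
      (X - C 1) * X ^ (k - 2) := by
  have : PowerSeries.constantCoeff.comp (polyToPS F) = evalRingHom 0 := by
    ext <;> simp [polyToPS, Polynomial.coeToPowerSeries.ringHom_apply]
  rw [map_map, this, ← Matrix.charpoly_map, charpoly_map_Umat_eval_zero q hk]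

theorem psToKbar_eq_algebraMap :
    psToKbar F = algebraMap (PowerSeries F) (AlgebraicClosure (LaurentSeries F)) :=
  rfl

theorem integralPS_iff {x : AlgebraicClosure (LaurentSeries F)} :
    IntegralPS F x ↔ IsIntegral (PowerSeries F) x :=
  Iff.rfl

theorem hasVal_zero_of_isUnit {u : PowerSeries F} (hu : IsUnit u) :
    HasVal F (psToKbar F u) 0 := by
  refine ⟨(hu.map _).ne_zero, 0, 1, one_pos, by simp, ?_, ?_⟩
  · simpa [integralPS_iff, psToKbar_eq_algebraMap] using isIntegral_algebraMap (x := u)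
  · simpa [integralPS_iff, psToKbar_eq_algebraMap, ← map_inv₀] using
      isIntegral_algebraMap (A := AlgebraicClosure (LaurentSeries F))
        (x := ((hu.unit⁻¹ : (PowerSeries F)ˣ) : PowerSeries F))

theorem HasVal.isIntegral_inv {μ : AlgebraicClosure (LaurentSeries F)} (h : HasVal F μ 0) :
    IsIntegral (PowerSeries F) μ⁻¹ := by
  obtain ⟨-, a, b, hb, hab, -, hint⟩ := h
  obtain rfl : a = 0 := by
    simpa [hb.ne'] using hab.symm
  lift b to ℕ using hb.le
  exact IsIntegral.of_pow (by exact_mod_cast hb) (by simpa [integralPS_iff] using hint)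

theorem not_hasVal_zero_of_isRoot {g : (PowerSeries F)[X]} (hg : g.Monic) {n : ℕ}
    (hgn : g.map PowerSeries.constantCoeff = X ^ n) {μ : AlgebraicClosure (LaurentSeries F)}
    (hμ : (g.map (psToKbar F)).IsRoot μ) : ¬HasVal F μ 0 := by
  intro hval
  obtain ⟨h, hh, rfl⟩ := exists_eq_X_pow_add_C_X_mul_of_map_constantCoeff_eq hg hgn
  exact not_isIntegral_inv_algebraMap (K := LaurentSeries F) PowerSeries.X_ne_zero
    (by simp [PowerSeries.isUnit_iff_constantCoeff])
    (isIntegral_inv_algebraMap_of_aeval_X_pow_add_C_mul hh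
      (by rwa [aeval_def, eval₂_eq_eval_map]) hval.1 hval.isIntegral_inv)

end

theorem dDim_zero_eq_one_general
    (q : ℕ)
    (F : Type) [Field F]
    (k : ℕ) (hk : 2 ≤ k) :
    dDim F q k 0 = 1 := by
  classical
  have hmonic : (((Umat F q k).charpoly).map (polyToPS F)).Monic :=
    (Matrix.charpoly_monic _).map _
  obtain ⟨r, g, hr, hg, hfactor, hgX⟩ := exists_X_sub_C_mul_of_map_constantCoeff_eq hmonic
    (map_constantCoeff_charpoly_Umat q hk) (by simp)
  have hsplit : ((Umat F q k).charpoly).map (polyToKbar F) =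
      (X - C (psToKbar F r)) * g.map (psToKbar F) := by
    rw [polyToKbar, ← map_map, hfactor, Polynomial.map_mul, Polynomial.map_sub, map_X, map_C]
  have hunit : IsUnit r := PowerSeries.isUnit_iff_constantCoeff.mpr (by simp [hr])
  rw [dDim, hsplit, roots_mul (hsplit ▸ ((Matrix.charpoly_monic _).map _).ne_zero),
    roots_X_sub_C, Multiset.singleton_add,
    Multiset.filter_cons_of_pos (p := (HasVal F · 0)) _ (hasVal_zero_of_isUnit hunit),
    Multiset.filter_eq_nil.mpr fun μ hμ =>
      not_hasVal_zero_of_isRoot hg hgX (isRoot_of_mem_roots hμ)]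
  rfl

/-- `d(k, 0) = 1`: the characteristic polynomial `det(X·I - U^{(k)})` has exactly one
root `λ` (with multiplicity) in `K̄` with `v(λ) = 0`. -/
theorem dDim_zero_eq_one
    (p q : ℕ) (hp : p.Prime) (hq : ∃ e : ℕ, 1 ≤ e ∧ q = p ^ e)
    (F : Type) [Field F] [Fintype F] (hF : Fintype.card F = q)
    (k : ℕ) (hk : 2 ≤ k) :
    dDim F q k 0 = 1 :=
  dDim_zero_eq_one_general q F k hk

end DrinfeldGM
end

section
/- Let p be a prime, q > 1 a power of p, k ≥ 2 and m ≥ 1 integers. Then for every integer j with 0 ≤ j ≤ min(k−2, p^m−1) and every integer i with 0 ≤ i ≤ k−2, one has the exact equality of entries U^{(k+p^m)}_{i,j} = U^{(k)}_{i,j} in 𝔽_q[t]. -/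
open Polynomial

noncomputable section DrinfeldGM

/- Every binomial coefficient in column `j` of `U^{(k)}` is `C(k-2-i, d)` with `d ≤ j`; in
characteristic `p` the identity `(1+X)^(n+p^m) = (1+X)^n (1+X^(p^m))` shows that adding `p^m` to
the upper argument does not change `C(n, d)` for `d < p^m`. -/

theorem intChoose_natCast (n d : ℕ) : intChoose n d = n.choose d := by
  unfold intChoose
  split_ifs with h
  · simp
  · rw [Nat.choose_eq_zero_of_lt (by omega), Nat.cast_zero]

theorem intChoose_of_neg (c : ℤ) {d : ℤ} (hd : d < 0) : intChoose c d = 0 :=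
  if_neg (by omega)

theorem Nat.cast_choose_add_expChar_pow (R : Type*) [CommSemiring R] (p : ℕ) [ExpChar R p]
    {m j : ℕ} (n : ℕ) (hj : j < p ^ m) :
    ((n + p ^ m).choose j : R) = (n.choose j : R) := by
  have hpoly : (X + 1 : R[X]) ^ (n + p ^ m) = (X + 1) ^ n * (X ^ p ^ m + 1) := by
    rw [pow_add, add_pow_expChar_pow, one_pow]
  have hcoeff := congrArg (coeff · j) hpoly
  simp only [coeff_X_add_one_pow] at hcoeff
  rw [hcoeff, mul_add, mul_one, coeff_add, coeff_X_add_one_pow, coeff_mul_X_pow',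
    if_neg (by omega), zero_add]

theorem cast_intChoose_add_expChar_pow (R : Type*) [CommRing R] (p : ℕ) [ExpChar R p]
    {m : ℕ} {c d : ℤ} (hc : 0 ≤ c) (hd : d < (p : ℤ) ^ m) :
    (intChoose (c + (p : ℤ) ^ m) d : R) = (intChoose c d : R) := by
  rcases lt_or_ge d 0 with hneg | hnonneg
  · rw [intChoose_of_neg _ hneg, intChoose_of_neg _ hneg]
  lift c to ℕ using hc
  lift d to ℕ using hnonneg
  rw [← Nat.cast_pow, ← Nat.cast_add, intChoose_natCast, intChoose_natCast]
  exact_mod_cast Nat.cast_choose_add_expChar_pow R p c (by exact_mod_cast hd)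

theorem Uent_add_expChar_pow (F : Type*) [Field F] (p : ℕ) [ExpChar F p] (q : ℕ) {k m i j : ℕ}
    (hi : i + 2 ≤ k) (hj : j < p ^ m) :
    Uent F q (k + p ^ m) i j = Uent F q k i j := by
  have hjZ : (j : ℤ) < (p : ℤ) ^ m := by exact_mod_cast hj
  have hshift : ∀ x : ℕ, ((k + p ^ m : ℕ) : ℤ) - 2 - x = ((k : ℤ) - 2 - x) + (p : ℤ) ^ m := by
    intro x; push_cast; ring
  have hcast : ∀ d : ℤ, d < (p : ℤ) ^ m →
      (intChoose ((k : ℤ) - 2 - i + (p : ℤ) ^ m) d : F[X]) = (intChoose ((k : ℤ) - 2 - i) d : F[X]) :=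
    fun d hd => cast_intChoose_add_expChar_pow F[X] p (by omega) hd
  unfold Uent
  split_ifs with hij
  · subst hij
    rw [hshift, hcast _ hjZ]
  · rw [hshift, Int.cast_add, Int.cast_mul, Int.cast_add, Int.cast_mul, hcast _ hjZ,
      hcast _ (by omega)]
  · rfl

theorem Umat_entry_eq_of_small_col_general
    (p q : ℕ) (hp : p.Prime) (hq : ∃ e : ℕ, 1 ≤ e ∧ q = p ^ e)
    (F : Type) [Field F] [Fintype F] (hF : Fintype.card F = q)
    (k m : ℕ)
    (i j : Fin (k + p ^ m - 1)) (i' j' : Fin (k - 1))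
    (hi : (i : ℕ) = (i' : ℕ)) (hj : (j : ℕ) = (j' : ℕ))
    (hjle : (j : ℕ) ≤ min (k - 2) (p ^ m - 1)) :
    Umat F q (k + p ^ m) i j = Umat F q k i' j' := by
  have : Fact p.Prime := ⟨hp⟩
  obtain ⟨e, -, rfl⟩ := hq
  have : CharP F p := charP_of_card_eq_prime_pow hF
  have hjp : (j : ℕ) < p ^ m := by
    have := pow_pos hp.pos m
    omega
  show Uent F (p ^ e) (k + p ^ m) i j = Uent F (p ^ e) k i' j'
  rw [hi, ← hj]
  exact Uent_add_expChar_pow F p (p ^ e) (by omega) hjp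

/-- For `k ≥ 2` and `m ≥ 1`, for every column index `j ≤ min(k-2, p^m-1)` and every row
index `i ≤ k-2`, the corresponding entries of `U^{(k+p^m)}` and `U^{(k)}` are equal
in `𝔽_q[t]`. -/
theorem Umat_entry_eq_of_small_col
    (p q : ℕ) (hp : p.Prime) (hq : ∃ e : ℕ, 1 ≤ e ∧ q = p ^ e)
    (F : Type) [Field F] [Fintype F] (hF : Fintype.card F = q)
    (k m : ℕ) (hk : 2 ≤ k) (hm : 1 ≤ m)
    (i j : Fin (k + p ^ m - 1)) (i' j' : Fin (k - 1))
    (hi : (i : ℕ) = (i' : ℕ)) (hj : (j : ℕ) = (j' : ℕ))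
    (hjle : (j : ℕ) ≤ min (k - 2) (p ^ m - 1)) :
    Umat F q (k + p ^ m) i j = Umat F q k i' j' :=
  Umat_entry_eq_of_small_col_general p q hp hq F hF k m i j i' j' hi hj hjle

end DrinfeldGM
end

section
/- Let p be a prime, q > 1 a power of p, k ≥ 2 and m ≥ 1 integers with k ≤ p^m. Then for every integer j with k−1 ≤ j ≤ p^m−1 and every integer i with 0 ≤ i ≤ k−2, the entry U^{(k+p^m)}_{i,j} is equal to 0. -/
open Polynomial

noncomputable section DrinfeldGM

/-! Vandermonde's identity together with `p ∣ C(p^m, a)` for `0 < a < p^m` shows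
`C(p^m + r, s) ≡ C(r, s) mod p` whenever `s < p^m`. The entry of `U^{(k+p^m)}` in row `i`,
column `j > i` is built from `C(p^m + r, j - i)` and `C(p^m + r, j)` with `r = k - 2 - i`;
for `k - 1 ≤ j < p^m` both lower arguments exceed `r`, so both binomials vanish mod `p`. -/

theorem Nat.cast_choose_prime_pow_add (R : Type*) [Semiring R] {p : ℕ} (hp : p.Prime)
    [CharP R p] {m s : ℕ} (r : ℕ) (hs : s < p ^ m) :
    ((p ^ m + r).choose s : R) = r.choose s := by
  rw [Nat.add_choose_eq, Nat.cast_sum, Finset.sum_eq_single_of_mem (0, s) (by simp)]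
  · simp
  rintro ⟨a, b⟩ hab hne
  rw [Finset.HasAntidiagonal.mem_antidiagonal] at hab
  have ha : a ≠ 0 := by rintro rfl; simp_all
  have hps : p ∣ (p ^ m).choose a := hp.dvd_choose_pow ha (by omega)
  rw [Nat.cast_mul, (CharP.cast_eq_zero_iff R p _).mpr hps, zero_mul]

theorem intChoose_natCast_s10 (c d : ℕ) : intChoose c d = c.choose d := by
  unfold intChoose
  split_ifs with h
  · simp
  · rw [Nat.choose_eq_zero_of_lt (by omega), Nat.cast_zero]

theorem Uent_add_prime_pow_eq_zero {F : Type*} [Field F] {p : ℕ} (hp : p.Prime)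
    [CharP F p] (q : ℕ) {k m i j : ℕ} (hik : i + 2 ≤ k) (hkj : k ≤ j + 1) (hj : j < p ^ m) :
    Uent F q (k + p ^ m) i j = 0 := by
  have hkpm : ((k + p ^ m : ℕ) : ℤ) - 2 - i = ((p ^ m + (k - 2 - i) : ℕ) : ℤ) := by
    push_cast; omega
  have hji : (j : ℤ) - i = ((j - i : ℕ) : ℤ) := by omega
  rw [Uent, if_neg (by omega), hkpm, hji, intChoose_natCast_s10, intChoose_natCast_s10]
  push_cast
  rw [Nat.cast_choose_prime_pow_add _ hp _ (by omega), Nat.cast_choose_prime_pow_add _ hp _ hj,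
    Nat.choose_eq_zero_of_lt (by omega), Nat.choose_eq_zero_of_lt (by omega)]
  simp

theorem Umat_entry_eq_zero_of_middle_col_general
    (p q : ℕ) (hp : p.Prime) (hq : ∃ e : ℕ, 1 ≤ e ∧ q = p ^ e)
    (F : Type) [Field F] [Fintype F] (hF : Fintype.card F = q)
    (k m : ℕ) (hk : 2 ≤ k)
    (i j : Fin (k + p ^ m - 1))
    (hi : (i : ℕ) ≤ k - 2) (hj1 : k - 1 ≤ (j : ℕ)) (hj2 : (j : ℕ) ≤ p ^ m - 1) :
    Umat F q (k + p ^ m) i j = 0 := by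
  have : Fact p.Prime := ⟨hp⟩
  obtain ⟨e, -, hqe⟩ := hq
  have : CharP F p := charP_of_card_eq_prime_pow (hF.trans hqe)
  have hpm : 0 < p ^ m := pow_pos hp.pos m
  exact Uent_add_prime_pow_eq_zero hp q (by omega) (by omega) (by omega)

/-- For `2 ≤ k ≤ p^m` (`m ≥ 1`), every entry of `U^{(k+p^m)}` in a row `i ≤ k-2` and a
column `j` with `k-1 ≤ j ≤ p^m-1` vanishes. -/
theorem Umat_entry_eq_zero_of_middle_col
    (p q : ℕ) (hp : p.Prime) (hq : ∃ e : ℕ, 1 ≤ e ∧ q = p ^ e)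
    (F : Type) [Field F] [Fintype F] (hF : Fintype.card F = q)
    (k m : ℕ) (hk : 2 ≤ k) (hm : 1 ≤ m) (hkpm : k ≤ p ^ m)
    (i j : Fin (k + p ^ m - 1))
    (hi : (i : ℕ) ≤ k - 2) (hj1 : k - 1 ≤ (j : ℕ)) (hj2 : (j : ℕ) ≤ p ^ m - 1) :
    Umat F q (k + p ^ m) i j = 0 :=
  Umat_entry_eq_zero_of_middle_col_general p q hp hq F hF k m hk i j hi hj1 hj2

end DrinfeldGM
end
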